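/- Let $\alpha_t : \mathbb{R}^d \to PD_d(\mathbb{R})$ be any map into symmetric positive definite matrices, $\alpha_{st} = (\alpha_s + \alpha_t)/2$, and $\sigma > 0$. Then the kernel $K_\sigma(s,t) = \det(\alpha_{st}^{-1/2})\, \exp\bigl(-|\alpha_{st}^{-1/2}(s-t)|^2/(2\sigma^2)\bigr)$ is a positive semidefinite kernel on $\mathbb{R}^d$, i.e. for any points $x_1, \ldots, x_m \in \mathbb{R}^d$ and reals $a_1, \ldots, a_m$, $\sum_{i,j} a_i a_j K_\sigma(x_i, x_j) \geq 0$. -/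

import Mathlib

/-!
Put `Q x = σ² α x` and `g_s(u) = exp (-(u - s)ᵀ (Q s)⁻¹ (u - s)) / √(det Q s)`. Completing the
square turns `g_s g_t` into a Gaussian in `u` times `exp (-(s - t)ᵀ (Q s + Q t)⁻¹ (s - t))`, so
`∫ g_s g_t = π^(d/2) exp (-(s - t)ᵀ (Q s + Q t)⁻¹ (s - t)) / √(det (Q s + Q t))`. Since
`Q s + Q t = 2σ² α_{st}` and the kernel sees `isq M` only through `det (isq M) = (det M)^(-1/2)` and
`|isq M v|² = vᵀ M⁻¹ v`, this is a positive multiple of `K(s, t)`. Hence `∑ aᵢ aⱼ K(xᵢ, xⱼ)` is a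
positive multiple of `∫ (∑ aᵢ g_{xᵢ})² ≥ 0`.
-/

open Matrix Real MeasureTheory

variable {ι : Type*} [Fintype ι]

theorem Matrix.IsSymm.dotProduct_mulVec_comm {A : Matrix ι ι ℝ} (hA : A.IsSymm) (x y : ι → ℝ) :
    x ⬝ᵥ A *ᵥ y = y ⬝ᵥ A *ᵥ x := by
  rw [dotProduct_mulVec, ← mulVec_transpose, hA.eq, dotProduct_comm]

theorem Matrix.PosDef.isSymm {n : Type*} {A : Matrix n n ℝ} (hA : A.PosDef) : A.IsSymm :=
  isHermitian_iff_isSymm.mp hA.isHermitian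

theorem dotProduct_transpose_mul_self_mulVec (B : Matrix ι ι ℝ) (v : ι → ℝ) :
    v ⬝ᵥ (Bᵀ * B) *ᵥ v = B *ᵥ v ⬝ᵥ B *ᵥ v := by
  rw [← mulVec_mulVec, dotProduct_mulVec, vecMul_transpose]

theorem Matrix.IsSymm.sum_sq_mulVec {S : Matrix ι ι ℝ} (hS : S.IsSymm) (v : ι → ℝ) :
    ∑ i, (S *ᵥ v) i ^ 2 = v ⬝ᵥ (S * S) *ᵥ v := by
  rw [show S * S = Sᵀ * S by rw [hS.eq], dotProduct_transpose_mul_self_mulVec]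
  simp only [dotProduct, sq]

open scoped MatrixOrder in
theorem Matrix.PosDef.exists_det_ne_zero_and_eq_transpose_mul_self [DecidableEq ι]
    {C : Matrix ι ι ℝ} (hC : C.PosDef) : ∃ B : Matrix ι ι ℝ, B.det ≠ 0 ∧ C = Bᵀ * B := by
  obtain ⟨B, rfl⟩ : ∃ B : Matrix ι ι ℝ, C = Bᵀ * B := by
    simpa [star_eq_conjTranspose] using
      CStarAlgebra.nonneg_iff_eq_star_mul_self.mp hC.posSemidef.nonneg
  refine ⟨B, fun hB => ?_, rfl⟩
  simpa [hB] using hC.det_pos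

theorem add_dotProduct_mulVec_add_of_mulVec_add_eq_zero {A B : Matrix ι ι ℝ}
    (hA : A.IsSymm) (hB : B.IsSymm) {a b : ι → ℝ} (hab : A *ᵥ a + B *ᵥ b = 0) (p : ι → ℝ) :
    (p + a) ⬝ᵥ A *ᵥ (p + a) + (p + b) ⬝ᵥ B *ᵥ (p + b) =
      p ⬝ᵥ (A + B) *ᵥ p + (a ⬝ᵥ A *ᵥ a + b ⬝ᵥ B *ᵥ b) := by
  have hcross : p ⬝ᵥ A *ᵥ a + p ⬝ᵥ B *ᵥ b = 0 := by rw [← dotProduct_add, hab, dotProduct_zero]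
  simp only [mulVec_add, dotProduct_add, add_dotProduct, add_mulVec]
  rw [hA.dotProduct_mulVec_comm a p, hB.dotProduct_mulVec_comm b p]
  linear_combination 2 * hcross

theorem dotProduct_mulVec_sub_add_dotProduct_mulVec_sub [DecidableEq ι] {A B : Matrix ι ι ℝ}
    (hA : A.IsSymm) (hB : B.IsSymm) (hAB : IsUnit (A + B).det) (u s t : ι → ℝ) :
    (u - s) ⬝ᵥ A *ᵥ (u - s) + (u - t) ⬝ᵥ B *ᵥ (u - t) =
      (u - (A + B)⁻¹ *ᵥ (A *ᵥ s + B *ᵥ t)) ⬝ᵥ (A + B) *ᵥ (u - (A + B)⁻¹ *ᵥ (A *ᵥ s + B *ᵥ t)) +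
        (s - t) ⬝ᵥ (A * (A + B)⁻¹ * B) *ᵥ (s - t) := by
  set C := A + B with hC
  set w := C⁻¹ *ᵥ (A *ᵥ s + B *ᵥ t)
  have hCw : C *ᵥ w = A *ᵥ s + B *ᵥ t := by
    rw [mulVec_mulVec, mul_nonsing_inv _ hAB, one_mulVec]
  have hws : w - s = C⁻¹ *ᵥ B *ᵥ (t - s) := by
    have : B *ᵥ (t - s) = A *ᵥ s + B *ᵥ t - C *ᵥ s := by
      rw [hC, add_mulVec, mulVec_sub]; abel
    rw [this, mulVec_sub, mulVec_mulVec s C⁻¹ C, nonsing_inv_mul _ hAB, one_mulVec]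
  have hbal : A *ᵥ (w - s) + B *ᵥ (w - t) = 0 := by
    have : A *ᵥ (w - s) + B *ᵥ (w - t) = C *ᵥ w - (A *ᵥ s + B *ᵥ t) := by
      rw [hC, add_mulVec, mulVec_sub, mulVec_sub]; abel
    rw [this, hCw, sub_self]
  -- with `a = w - s`, `b = w - t`, the balance gives `b ⬝ B b = -(b ⬝ A a)`, so the remainder
  -- is `(a - b) ⬝ A a = (t - s) ⬝ A a`
  have hrem : (w - s) ⬝ᵥ A *ᵥ (w - s) + (w - t) ⬝ᵥ B *ᵥ (w - t) =
      (s - t) ⬝ᵥ (A * C⁻¹ * B) *ᵥ (s - t) := by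
    rw [eq_neg_of_add_eq_zero_right hbal, dotProduct_neg, ← sub_eq_add_neg, ← sub_dotProduct,
      sub_sub_sub_cancel_left, hws, ← neg_sub s t]
    simp only [mulVec_mulVec, neg_dotProduct, mulVec_neg, dotProduct_neg, neg_neg, Matrix.mul_assoc]
  rw [← sub_add_sub_cancel u w s, ← sub_add_sub_cancel u w t,
    add_dotProduct_mulVec_add_of_mulVec_add_eq_zero hA hB hbal, hrem]

section ChangeOfVariables

variable [DecidableEq ι] {E : Type*} [NormedAddCommGroup E] {B : Matrix ι ι ℝ}

theorem measurableEmbedding_mulVec (hB : B.det ≠ 0) :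
    MeasurableEmbedding (B *ᵥ · : (ι → ℝ) → ι → ℝ) :=
  (LinearMap.equivOfDetNeZero (toLin' B) (by rwa [LinearMap.det_toLin'])).toContinuousLinearEquiv
    |>.toHomeomorph.measurableEmbedding

theorem map_mulVec_volume (hB : B.det ≠ 0) :
    Measure.map (B *ᵥ ·) volume = ENNReal.ofReal |B.det|⁻¹ • (volume : Measure (ι → ℝ)) := by
  rw [← abs_inv]
  exact Real.map_matrix_volume_pi_eq_smul_volume_pi hB

theorem integral_comp_mulVec [NormedSpace ℝ E] (hB : B.det ≠ 0) (f : (ι → ℝ) → E) :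
    ∫ v, f (B *ᵥ v) = |B.det|⁻¹ • ∫ v, f v := by
  rw [← (measurableEmbedding_mulVec hB).integral_map, map_mulVec_volume hB,
    integral_smul_measure, ENNReal.toReal_ofReal (by positivity)]

theorem integrable_comp_mulVec_iff (hB : B.det ≠ 0) {f : (ι → ℝ) → E} :
    Integrable (fun v => f (B *ᵥ v)) ↔ Integrable f := by
  rw [← Function.comp_def, ← (measurableEmbedding_mulVec hB).integrable_map_iff,
    map_mulVec_volume hB]
  exact integrable_smul_measure (by simpa) ENNReal.ofReal_ne_top

end ChangeOfVariables

section GaussianIntegrals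

theorem exp_neg_dotProduct_self_eq_prod (v : ι → ℝ) :
    exp (-(v ⬝ᵥ v)) = ∏ i, exp (-1 * v i ^ 2) := by
  simp [← Real.exp_sum, dotProduct, sq]

theorem integral_exp_neg_dotProduct_self :
    ∫ v : ι → ℝ, exp (-(v ⬝ᵥ v)) = √π ^ Fintype.card ι := by
  simp_rw [exp_neg_dotProduct_self_eq_prod]
  rw [volume_pi, integral_fintype_prod_eq_pow (fun x : ℝ => exp (-1 * x ^ 2)), integral_gaussian]
  simp

theorem integrable_exp_neg_dotProduct_self : Integrable fun v : ι → ℝ => exp (-(v ⬝ᵥ v)) := by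
  simp_rw [exp_neg_dotProduct_self_eq_prod]
  exact Integrable.fintype_prod fun _ => integrable_exp_neg_mul_sq one_pos

variable [DecidableEq ι] {A B C : Matrix ι ι ℝ}

theorem integral_exp_neg_dotProduct_mulVec (hC : C.PosDef) :
    ∫ v, exp (-(v ⬝ᵥ C *ᵥ v)) = √π ^ Fintype.card ι / √C.det := by
  obtain ⟨B, hB, rfl⟩ := hC.exists_det_ne_zero_and_eq_transpose_mul_self
  simp_rw [dotProduct_transpose_mul_self_mulVec]
  rw [integral_comp_mulVec hB (fun v => exp (-(v ⬝ᵥ v))), integral_exp_neg_dotProduct_self,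
    det_mul, det_transpose, ← sq, sqrt_sq_eq_abs, smul_eq_mul, inv_mul_eq_div]

theorem integrable_exp_neg_dotProduct_mulVec (hC : C.PosDef) :
    Integrable fun v => exp (-(v ⬝ᵥ C *ᵥ v)) := by
  obtain ⟨B, hB, rfl⟩ := hC.exists_det_ne_zero_and_eq_transpose_mul_self
  simp_rw [dotProduct_transpose_mul_self_mulVec]
  exact (integrable_comp_mulVec_iff hB (f := fun v => exp (-(v ⬝ᵥ v)))).2
    integrable_exp_neg_dotProduct_self

theorem exp_neg_dotProduct_mulVec_sub_mul_exp_neg_dotProduct_mulVec_sub (hA : A.IsSymm)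
    (hB : B.IsSymm) (hAB : IsUnit (A + B).det) (s t u : ι → ℝ) :
    exp (-((u - s) ⬝ᵥ A *ᵥ (u - s))) * exp (-((u - t) ⬝ᵥ B *ᵥ (u - t))) =
      exp (-((u - (A + B)⁻¹ *ᵥ (A *ᵥ s + B *ᵥ t)) ⬝ᵥ (A + B) *ᵥ
        (u - (A + B)⁻¹ *ᵥ (A *ᵥ s + B *ᵥ t)))) *
      exp (-((s - t) ⬝ᵥ (A * (A + B)⁻¹ * B) *ᵥ (s - t))) := by
  rw [← exp_add, ← exp_add, ← neg_add, ← neg_add,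
    dotProduct_mulVec_sub_add_dotProduct_mulVec_sub hA hB hAB]

theorem integral_exp_neg_dotProduct_mulVec_sub_mul (hA : A.IsSymm) (hB : B.IsSymm)
    (hAB : (A + B).PosDef) (s t : ι → ℝ) :
    ∫ u, exp (-((u - s) ⬝ᵥ A *ᵥ (u - s))) * exp (-((u - t) ⬝ᵥ B *ᵥ (u - t))) =
      √π ^ Fintype.card ι / √(A + B).det * exp (-((s - t) ⬝ᵥ (A * (A + B)⁻¹ * B) *ᵥ (s - t))) := by
  simp_rw [exp_neg_dotProduct_mulVec_sub_mul_exp_neg_dotProduct_mulVec_sub hA hB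
    hAB.det_pos.ne'.isUnit s t]
  rw [integral_mul_const, integral_sub_right_eq_self (fun v => exp (-(v ⬝ᵥ (A + B) *ᵥ v))),
    integral_exp_neg_dotProduct_mulVec hAB]

theorem integrable_exp_neg_dotProduct_mulVec_sub_mul (hA : A.IsSymm) (hB : B.IsSymm)
    (hAB : (A + B).PosDef) (s t : ι → ℝ) :
    Integrable fun u => exp (-((u - s) ⬝ᵥ A *ᵥ (u - s))) * exp (-((u - t) ⬝ᵥ B *ᵥ (u - t))) := by
  simp_rw [exp_neg_dotProduct_mulVec_sub_mul_exp_neg_dotProduct_mulVec_sub hA hB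
    hAB.det_pos.ne'.isUnit s t]
  exact ((integrable_exp_neg_dotProduct_mulVec hAB).comp_sub_right _).mul_const _

end GaussianIntegrals

section GaussianBump

variable [DecidableEq ι] {Q R : Matrix ι ι ℝ}

theorem Matrix.mul_inv_add_inv_mul (hQ : IsUnit Q.det) (hR : IsUnit R.det) :
    R * (Q⁻¹ + R⁻¹) * Q = Q + R := by
  rw [Matrix.mul_add, Matrix.add_mul, mul_nonsing_inv _ hR, Matrix.one_mul, Matrix.mul_assoc,
    nonsing_inv_mul _ hQ, Matrix.mul_one, add_comm]

theorem Matrix.inv_mul_inv_add_inv_inv_mul_inv (hQ : IsUnit Q.det) (hR : IsUnit R.det) :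
    Q⁻¹ * (Q⁻¹ + R⁻¹)⁻¹ * R⁻¹ = (Q + R)⁻¹ := by
  rw [← mul_inv_add_inv_mul hQ hR, Matrix.mul_inv_rev, Matrix.mul_inv_rev, Matrix.mul_assoc]

/-- `π ^ (n / 2)` times the density of the normal law with mean `s` and covariance `Q / 2`. -/
noncomputable def gaussianBump (Q : Matrix ι ι ℝ) (s u : ι → ℝ) : ℝ :=
  exp (-((u - s) ⬝ᵥ Q⁻¹ *ᵥ (u - s))) / √Q.det

theorem integral_gaussianBump_mul_gaussianBump (hQ : Q.PosDef) (hR : R.PosDef) (s t : ι → ℝ) :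
    ∫ u, gaussianBump Q s u * gaussianBump R t u =
      √π ^ Fintype.card ι * gaussianBump (Q + R) t s := by
  have hdet : √(Q + R).det = √Q.det * √R.det * √(Q⁻¹ + R⁻¹).det := by
    rw [← mul_inv_add_inv_mul hQ.det_pos.ne'.isUnit hR.det_pos.ne'.isUnit, det_mul, det_mul,
      sqrt_mul (mul_pos hR.det_pos (hQ.inv.add hR.inv).det_pos).le, sqrt_mul hR.det_pos.le]
    ring
  simp only [gaussianBump, div_mul_div_comm]
  rw [integral_div,
    integral_exp_neg_dotProduct_mulVec_sub_mul hQ.inv.isSymm hR.inv.isSymm (hQ.inv.add hR.inv),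
    inv_mul_inv_add_inv_inv_mul_inv hQ.det_pos.ne'.isUnit hR.det_pos.ne'.isUnit, hdet]
  ring

theorem integrable_gaussianBump_mul_gaussianBump (hQ : Q.PosDef) (hR : R.PosDef) (s t : ι → ℝ) :
    Integrable fun u => gaussianBump Q s u * gaussianBump R t u := by
  simp only [gaussianBump, div_mul_div_comm]
  exact (integrable_exp_neg_dotProduct_mulVec_sub_mul hQ.inv.isSymm hR.inv.isSymm
    (hQ.inv.add hR.inv) s t).div_const _

theorem gaussianBump_smul {c : ℝ} (hc : 0 < c) (hQ : IsUnit Q.det) (s u : ι → ℝ) :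
    gaussianBump (c • Q) s u =
      exp (-((u - s) ⬝ᵥ Q⁻¹ *ᵥ (u - s)) / c) / (√(c ^ Fintype.card ι) * √Q.det) := by
  have := invertibleOfNonzero hc.ne'
  rw [gaussianBump, inv_smul _ _ hQ, invOf_eq_inv, smul_mulVec, dotProduct_smul, smul_eq_mul,
    det_smul, sqrt_mul (by positivity), inv_mul_eq_div, neg_div]

end GaussianBump

theorem det_mul_exp_neg_sum_sq_mulVec_of_mul_self_eq_inv [DecidableEq ι] {S M : Matrix ι ι ℝ}
    (hS : S.PosDef) (h : S * S = M⁻¹) (c : ℝ) (v : ι → ℝ) :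
    S.det * exp (-(∑ i, (S *ᵥ v) i ^ 2) / c) = exp (-(v ⬝ᵥ M⁻¹ *ᵥ v) / c) / √M.det := by
  have hdet : S.det = (√M.det)⁻¹ := by
    rw [← sqrt_inv, ← Ring.inverse_eq_inv', ← det_nonsing_inv, ← h, det_mul,
      sqrt_mul_self hS.det_pos.le]
  rw [hS.isSymm.sum_sq_mulVec, h, hdet, inv_mul_eq_div]

theorem sum_sum_mul_integral_mul_nonneg {κ α : Type*} [Fintype κ] [MeasurableSpace α]
    {μ : Measure α} {F : κ → α → ℝ} (hF : ∀ i j, Integrable (fun u => F i u * F j u) μ)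
    (a : κ → ℝ) : 0 ≤ ∑ i, ∑ j, a i * a j * ∫ u, F i u * F j u ∂μ := by
  have hsq (u : α) : (∑ i, a i * F i u) ^ 2 = ∑ i, ∑ j, a i * a j * (F i u * F j u) := by
    rw [sq, Finset.sum_mul_sum]
    exact Finset.sum_congr rfl fun i _ => Finset.sum_congr rfl fun j _ => by ring
  have hint : ∫ u, (∑ i, a i * F i u) ^ 2 ∂μ = ∑ i, ∑ j, a i * a j * ∫ u, F i u * F j u ∂μ := by
    simp_rw [hsq]
    rw [integral_finsetSum _ fun i _ => integrable_finsetSum _ fun j _ => (hF i j).const_mul _]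
    refine Finset.sum_congr rfl fun i _ => ?_
    rw [integral_finsetSum _ fun j _ => (hF i j).const_mul _]
    simp_rw [integral_const_mul]
  exact hint ▸ integral_nonneg fun u => sq_nonneg _

/-- The nonstationary Gaussian kernel
`K_σ(s,t) = det(α_{st}^{-1/2}) exp(-|α_{st}^{-1/2}(s-t)|²/(2σ²))`, where
`α_{st} = (α_s + α_t)/2` and `α^{-1/2}` denotes the inverse positive definite square
root, is a positive semidefinite kernel on `ℝᵈ`. -/
theorem nonstationary_gaussian_kernel_posSemidef (d : ℕ)
    (α : (Fin d → ℝ) → Matrix (Fin d) (Fin d) ℝ)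
    (hα : ∀ x, (α x).PosDef)
    (isq : Matrix (Fin d) (Fin d) ℝ → Matrix (Fin d) (Fin d) ℝ)
    (hisq : ∀ M : Matrix (Fin d) (Fin d) ℝ, M.PosDef →
      (isq M).PosDef ∧ isq M * isq M = M⁻¹)
    (σ : ℝ) (hσ : 0 < σ)
    (K : (Fin d → ℝ) → (Fin d → ℝ) → ℝ)
    (hK : ∀ s t, K s t = (isq ((1 / 2 : ℝ) • (α s + α t))).det *
      Real.exp (-(∑ i, ((isq ((1 / 2 : ℝ) • (α s + α t))).mulVec (s - t) i) ^ 2) /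
        (2 * σ ^ 2))) :
    ∀ (m : ℕ) (x : Fin m → (Fin d → ℝ)) (a : Fin m → ℝ),
      0 ≤ ∑ i, ∑ j, a i * a j * K (x i) (x j) := by
  intro m x a
  set Q : Fin m → Matrix (Fin d) (Fin d) ℝ := fun i => σ ^ 2 • α (x i)
  have hQ (i : Fin m) : (Q i).PosDef := (hα (x i)).smul (by positivity)
  set c : ℝ := √((2 * σ ^ 2) ^ d) / √π ^ d with hc
  have hgram (i j : Fin m) :
      K (x i) (x j) = c * ∫ u, gaussianBump (Q i) (x i) u * gaussianBump (Q j) (x j) u := by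
    have hM : ((1 / 2 : ℝ) • (α (x i) + α (x j))).PosDef := ((hα _).add (hα _)).smul (by norm_num)
    have hQQ : Q i + Q j = (2 * σ ^ 2) • ((1 / 2 : ℝ) • (α (x i) + α (x j))) := by
      simp only [Q]; module
    rw [hK, det_mul_exp_neg_sum_sq_mulVec_of_mul_self_eq_inv (hisq _ hM).1 (hisq _ hM).2,
      integral_gaussianBump_mul_gaussianBump (hQ i) (hQ j), hQQ,
      gaussianBump_smul (by positivity) hM.det_pos.ne'.isUnit, Fintype.card_fin, hc]
    field_simp
  calc 0 ≤ c * ∑ i, ∑ j, a i * a j * ∫ u, gaussianBump (Q i) (x i) u * gaussianBump (Q j) (x j) u :=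
        mul_nonneg (by positivity) (sum_sum_mul_integral_mul_nonneg
          (fun i j => integrable_gaussianBump_mul_gaussianBump (hQ i) (hQ j) (x i) (x j)) a)
    _ = ∑ i, ∑ j, a i * a j * K (x i) (x j) := by
      simp_rw [hgram, Finset.mul_sum]
      exact Finset.sum_congr rfl fun i _ => Finset.sum_congr rfl fun j _ => by ring
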